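/- arXiv:2605.26218 — 4 statements merged into one kernel-verified Lean document; each statement's English description precedes it below -/
import Mathlib

section
/- Let d ≥ 1, let n ≥ 1, and let γ : Fin (2n) → Matrix (Fin d) (Fin d) ℂ satisfy γ_a * γ_b + γ_b * γ_a = 0 for all a ≠ b and γ_a * γ_a = 1 for all a. Let ρ : Matrix (Fin d) (Fin d) ℂ with trace ρ = 1, and let K = ∑_{a=1}^{2n} γ_a ⊗ₖ γ_a. Then trace( (1/2) • (K * K) * (ρ ⊗ₖ ρ) ) = n − ∑_{a < b} ( trace( (−i) • (γ_a * γ_b * ρ) ) )², where the sum runs over pairs a < b in Fin (2n). (In particular, writing Γ_{ab} = trace((−i)·γ_a γ_b ρ), the Bell observable F̂₁ = K²/2 satisfies tr(F̂₁ ρ⊗ρ) = n − ∑_{a<b} Γ_{ab}² = FAF₁(ρ).) -/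
open Kronecker Finset

/-! Since `(A ⊗ A)(B ⊗ B) = AB ⊗ AB` and `tr (X ⊗ Y) = tr X * tr Y`, the left side is
`½ ∑_{a,b} tr(γ_a γ_b ρ)²`. The diagonal terms are `tr(ρ)² = 1`; anticommutation makes
`tr(γ_a γ_b ρ) = -tr(γ_b γ_a ρ)`, so the off-diagonal squares pair up into `2 ∑_{a<b}`, and
`(-i)² = -1` turns each of them into `-Γ_{ab}²`. -/

theorem Finset.sum_sum_eq_sum_diag_add_two_nsmul_sum_lt {ι M : Type*} [Fintype ι] [LinearOrder ι]
    [AddCommMonoid M] (f : ι → ι → M) (hf : ∀ a b, f a b = f b a) :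
    ∑ a, ∑ b, f a b =
      ∑ a, f a a + 2 • ∑ p ∈ univ.filter (fun p : ι × ι => p.1 < p.2), f p.1 p.2 := by
  have htrichotomy : ∀ p : ι × ι, f p.1 p.2 =
      ((if p.1 < p.2 then f p.1 p.2 else 0) + if p.1 = p.2 then f p.1 p.2 else 0) +
        if p.2 < p.1 then f p.1 p.2 else 0 := by
    intro p
    rcases lt_trichotomy p.1 p.2 with h | h | h
    · simp [h, h.ne, h.not_gt]
    · simp [h]
    · simp [h, h.ne', h.not_gt]
  have hswap : ∑ p ∈ univ.filter (fun p : ι × ι => p.2 < p.1), f p.1 p.2 =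
      ∑ p ∈ univ.filter (fun p : ι × ι => p.1 < p.2), f p.1 p.2 :=
    sum_equiv (Equiv.prodComm ι ι) (by simp) (fun p _ => hf _ _)
  have hdiag : ∑ p ∈ univ.filter (fun p : ι × ι => p.1 = p.2), f p.1 p.2 = ∑ a, f a a := by
    rw [sum_filter, Fintype.sum_prod_type]
    simp
  rw [← sum_product', univ_product_univ, sum_congr rfl fun p _ => htrichotomy p,
    sum_add_distrib, sum_add_distrib, ← sum_filter, ← sum_filter, ← sum_filter,
    hswap, hdiag, two_nsmul]
  abel

theorem Matrix.trace_sum_kronecker_mul_sum_kronecker_mul_kronecker {ι m R : Type*} [Fintype ι]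
    [Fintype m] [CommRing R] (A B : ι → Matrix m m R) (ρ σ : Matrix m m R) :
    trace ((∑ a, A a ⊗ₖ A a) * (∑ b, B b ⊗ₖ B b) * (ρ ⊗ₖ σ)) =
      ∑ a, ∑ b, trace (A a * B b * ρ) * trace (A a * B b * σ) := by
  simp only [Matrix.sum_mul, Matrix.mul_sum, trace_sum, ← mul_kronecker_mul, trace_kronecker]
  exact sum_comm

theorem Matrix.trace_mul_mul_eq_neg_of_anticomm {m R : Type*} [Fintype m] [CommRing R]
    {A B : Matrix m m R} (h : A * B + B * A = 0) (ρ : Matrix m m R) :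
    trace (A * B * ρ) = -trace (B * A * ρ) := by
  rw [eq_neg_of_add_eq_zero_left h, neg_mul, trace_neg]

theorem stmt_4_general (d n : ℕ)
    (γ : Fin (2 * n) → Matrix (Fin d) (Fin d) ℂ)
    (hanti : ∀ a b, a ≠ b → γ a * γ b + γ b * γ a = 0)
    (hsq : ∀ a, γ a * γ a = 1)
    (ρ : Matrix (Fin d) (Fin d) ℂ) (hρ : ρ.trace = 1) :
    Matrix.trace
        (((1 / 2 : ℂ) • ((∑ a, γ a ⊗ₖ γ a) * (∑ a, γ a ⊗ₖ γ a))) * (ρ ⊗ₖ ρ)) =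
      (n : ℂ) -
        ∑ p ∈ Finset.univ.filter
            (fun p : Fin (2 * n) × Fin (2 * n) => p.1 < p.2),
          (Matrix.trace ((-Complex.I) • (γ p.1 * γ p.2 * ρ))) ^ 2 := by
  set t : Fin (2 * n) → Fin (2 * n) → ℂ := fun a b => (γ a * γ b * ρ).trace
  have hsymm : ∀ a b, t a b ^ 2 = t b a ^ 2 := by
    intro a b
    rcases eq_or_ne a b with rfl | hab
    · rfl
    · rw [show t a b = -t b a from Matrix.trace_mul_mul_eq_neg_of_anticomm (hanti a b hab) ρ,
        neg_sq]
  have hdiag : ∀ a, t a a ^ 2 = 1 := fun a => by simp [t, hsq, hρ]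
  have hΓ : ∀ a b, Matrix.trace ((-Complex.I) • (γ a * γ b * ρ)) ^ 2 = -t a b ^ 2 := by
    intro a b
    simp [t, Matrix.trace_smul, mul_pow]
  rw [Matrix.smul_mul, Matrix.trace_smul,
    Matrix.trace_sum_kronecker_mul_sum_kronecker_mul_kronecker]
  simp_rw [← sq]
  rw [sum_sum_eq_sum_diag_add_two_nsmul_sum_lt _ hsymm]
  simp only [hdiag, hΓ, sum_neg_distrib, sum_const, card_univ, Fintype.card_fin, smul_eq_mul,
    nsmul_eq_mul]
  push_cast
  ring

/-- Unbiasedness of the two-copy Bell FAF estimator: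
`tr(F̂₁ ρ⊗ρ) = n − ∑_{a<b} Γ_{ab}²` where `F̂₁ = K²/2`,
`K = ∑_a γ_a ⊗ₖ γ_a` and `Γ_{ab} = tr((−i) γ_a γ_b ρ)`. -/
theorem stmt_4 (d n : ℕ) (hd : 1 ≤ d) (hn : 1 ≤ n)
    (γ : Fin (2 * n) → Matrix (Fin d) (Fin d) ℂ)
    (hanti : ∀ a b, a ≠ b → γ a * γ b + γ b * γ a = 0)
    (hsq : ∀ a, γ a * γ a = 1)
    (ρ : Matrix (Fin d) (Fin d) ℂ) (hρ : ρ.trace = 1) :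
    Matrix.trace
        (((1 / 2 : ℂ) • ((∑ a, γ a ⊗ₖ γ a) * (∑ a, γ a ⊗ₖ γ a))) * (ρ ⊗ₖ ρ)) =
      (n : ℂ) -
        ∑ p ∈ Finset.univ.filter
            (fun p : Fin (2 * n) × Fin (2 * n) => p.1 < p.2),
          (Matrix.trace ((-Complex.I) • (γ p.1 * γ p.2 * ρ))) ^ 2 :=
  stmt_4_general d n γ hanti hsq ρ hρ
end

section
/- Let n ≥ 2 and let q : Fin n → ℝ satisfy 0 < q_j < 1 for all j. For x : Fin n → Bool define Λ(x) = ∏_{j} (if x_j then q_j else (1 − q_j)). Suppose there exist a string x₀ and a real λ₀ such that Λ(x) = λ₀ for every x ≠ x₀. Then q_j = 1/2 for every j (and hence all 2^n values Λ(x) are equal). -/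
open Finset

/-!
Flipping a single bit `x j` of an occupation string multiplies `Λ(x)` by `q j / (1 - q j)` or its
inverse. Since `n ≥ 2`, the complement of `x₀` remains different from `x₀` after its `j`-th bit is
set to either value, so both of these strings carry the common eigenvalue `λ₀`; cancelling the
positive product over the other modes gives `q j = 1 - q j`.
-/

section ThermalWeight

variable {ι : Type*} [Fintype ι]

noncomputable def thermalWeight (q : ι → ℝ) (x : ι → Bool) : ℝ :=
  ∏ i, if x i then q i else 1 - q i

variable [DecidableEq ι]

theorem thermalWeight_update (q : ι → ℝ) (x : ι → Bool) (j : ι) (b : Bool) :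
    thermalWeight q (Function.update x j b) =
      (if b then q j else 1 - q j) * ∏ i ∈ {j}ᶜ, if x i then q i else 1 - q i := by
  rw [thermalWeight, Fintype.prod_eq_mul_prod_compl j, Function.update_self]
  congr 1
  refine prod_congr rfl fun i hi => ?_
  rw [Function.update_of_ne (by simpa using hi)]

theorem eq_half_of_thermalWeight_update_eq {q : ι → ℝ} (hq0 : ∀ i, 0 < q i) (hq1 : ∀ i, q i < 1)
    (x : ι → Bool) (j : ι)
    (h : thermalWeight q (Function.update x j true) = thermalWeight q (Function.update x j false)) :
    q j = 1 / 2 := by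
  have hrest : 0 < ∏ i ∈ {j}ᶜ, if x i then q i else 1 - q i :=
    prod_pos fun i _ => by split_ifs <;> linarith [hq0 i, hq1 i]
  rw [thermalWeight_update, thermalWeight_update, if_pos rfl, if_neg Bool.false_ne_true] at h
  linarith [mul_right_cancel₀ hrest.ne' h]

theorem eq_half_of_thermalWeight_eq_of_ne [Nontrivial ι] {q : ι → ℝ} (hq0 : ∀ i, 0 < q i)
    (hq1 : ∀ i, q i < 1) (x₀ : ι → Bool) (lam₀ : ℝ)
    (h : ∀ x, x ≠ x₀ → thermalWeight q x = lam₀) (j : ι) :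
    q j = 1 / 2 := by
  obtain ⟨k, hkj⟩ := exists_ne j
  have hne (b : Bool) : Function.update (fun i => !x₀ i) j b ≠ x₀ := fun heq => by
    simpa [Function.update_of_ne hkj] using congrFun heq k
  exact eq_half_of_thermalWeight_update_eq hq0 hq1 _ j ((h _ (hne true)).trans (h _ (hne false)).symm)

end ThermalWeight

/-- Spectral rigidity of product thermal states: if the eigenvalue function
`Λ(x) = ∏_j q_j^{x_j}(1−q_j)^{1−x_j}` takes a common value on all strings
`x ≠ x₀`, then every `q_j = 1/2`. -/
theorem stmt_11 (n : ℕ) (hn : 2 ≤ n) (q : Fin n → ℝ)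
    (hq0 : ∀ j, 0 < q j) (hq1 : ∀ j, q j < 1)
    (x₀ : Fin n → Bool) (lam₀ : ℝ)
    (h : ∀ x : Fin n → Bool, x ≠ x₀ →
      (∏ j, if x j then q j else 1 - q j) = lam₀) :
    ∀ j, q j = 1 / 2 :=
  have : Nontrivial (Fin n) := Fin.nontrivial_iff_two_le.mpr hn
  eq_half_of_thermalWeight_eq_of_ne hq0 hq1 x₀ lam₀ h
end

section
/- Let D ≥ 1, let B : Matrix (Fin D) (Fin D) ℂ be Hermitian with trace B = 0, let e ∈ ℂ^D be a fixed unit vector, and let μ be the Haar probability measure on the unitary group U(D) = Matrix.unitaryGroup (Fin D) ℂ. Then ∫ |⟨e, (U⋆ * B * U) e⟩|² dμ(U) = (∑_{i,j} |B_{ij}|²) / (D(D+1)), i.e. the Haar second moment of ⟨ψ|B|ψ⟩ over random pure states ψ = U e equals tr(B²)/(D(D+1)). -/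
/-!
Write `ψ = U e`. Expanding `|⟨ψ, B ψ⟩|²` reduces everything to the fourth moments
`T a b c d = 𝔼[ψ_a ψ_b ψ̄_c ψ̄_d]`, and left invariance of `μ` makes `T` invariant under
`ψ ↦ V ψ` for every unitary `V`. Diagonal phases force `T a b c d = 0` unless `{a, b} = {c, d}`;
a reflection mixing two coordinates gives `𝔼|ψ_a|⁴ = 2 𝔼|ψ_a|²|ψ_b|²`, the same for every `a`;
and `‖ψ‖ = 1` fixes the scale. Hence `T a b c d = (δ_ac δ_bd + δ_ad δ_bc) / (D (D + 1))`, and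
contracting with `B` gives `(|tr B|² + ∑ |B_ij|²) / (D (D + 1))` for every matrix `B`.
-/

open MeasureTheory Finset Matrix ComplexConjugate

namespace Matrix

variable {ι : Type*} [Fintype ι] [DecidableEq ι]

instance {𝕜 : Type*} [RCLike 𝕜] : CompactSpace (unitaryGroup ι 𝕜) := by
  refine isCompact_iff_compactSpace.mp <| (isCompact_univ_pi fun _ =>
    isCompact_univ_pi fun _ => ProperSpace.isCompact_closedBall (0 : 𝕜) 1).of_isClosed_subset
    (isClosed_unitary (R := Matrix ι ι 𝕜)) fun U hU i _ j _ => ?_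
  simpa using entry_norm_bound_of_unitary hU i j

variable {α : Type*} [CommRing α] [StarRing α]

theorem diagonal_mem_unitaryGroup {z : ι → α} (hz : ∀ i, star (z i) * z i = 1) :
    diagonal z ∈ unitaryGroup ι α := by
  rw [mem_unitaryGroup_iff', star_eq_conjTranspose, diagonal_conjTranspose, diagonal_mul_diagonal]
  exact diagonal_eq_diagonal_iff.mpr hz |>.trans diagonal_one

theorem one_sub_two_vecMulVec_mem_unitaryGroup {u : ι → α} (hu : star u ⬝ᵥ u = 1) :
    1 - (2 : α) • vecMulVec u (star u) ∈ unitaryGroup ι α := by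
  have hP : vecMulVec u (star u) * vecMulVec u (star u) = vecMulVec u (star u) := by
    rw [vecMulVec_mul_vecMulVec, hu, one_smul]
  rw [mem_unitaryGroup_iff', star_eq_conjTranspose, conjTranspose_sub, conjTranspose_one,
    conjTranspose_smul, conjTranspose_vecMulVec, star_star]
  simp only [sub_mul, mul_sub, one_mul, mul_one, smul_mul_assoc, mul_smul_comm, hP, star_ofNat]
  module

theorem star_mulVec_dotProduct_mulVec {U : Matrix ι ι α} (hU : U ∈ unitaryGroup ι α)
    (v : ι → α) : star (U *ᵥ v) ⬝ᵥ (U *ᵥ v) = star v ⬝ᵥ v := by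
  rw [star_mulVec, dotProduct_mulVec, vecMul_vecMul, ← star_eq_conjTranspose,
    mem_unitaryGroup_iff'.mp hU, vecMul_one]

end Matrix

namespace HaarRandomState

variable {ι : Type*}

def quarticMonomial (ψ : ι → ℂ) (a b c d : ι) : ℂ :=
  ψ a * ψ b * conj (ψ c) * conj (ψ d)

theorem quarticMonomial_mul (z ψ : ι → ℂ) (a b c d : ι) :
    quarticMonomial (z * ψ) a b c d = quarticMonomial z a b c d * quarticMonomial ψ a b c d := by
  simp only [quarticMonomial, Pi.mul_apply, map_mul]
  ring

theorem exists_phase_quarticMonomial_ne_one [DecidableEq ι] {a b c d : ι}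
    (hacbd : ¬(a = c ∧ b = d)) (hadbc : ¬(a = d ∧ b = c)) :
    ∃ z : ι → ℂ, (∀ i, star (z i) * z i = 1) ∧ quarticMonomial z a b c d ≠ 1 := by
  obtain ⟨m, hm, hunpaired⟩ : ∃ m, (a = m ∨ b = m ∨ c = m ∨ d = m) ∧
      ((c ≠ m ∧ d ≠ m) ∨ (a ≠ m ∧ b ≠ m)) := by
    have : (c ≠ a ∧ d ≠ a) ∨ (c ≠ b ∧ d ≠ b) ∨ (a ≠ c ∧ b ≠ c) ∨ (a ≠ d ∧ b ≠ d) := by grind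
    rcases this with h | h | h | h
    exacts [⟨a, by simp, .inl h⟩, ⟨b, by simp, .inl h⟩, ⟨c, by simp, .inr h⟩, ⟨d, by simp, .inr h⟩]
  -- the phase `i` at the unpaired index `m` multiplies the monomial by `i`, `-1` or `-i`
  refine ⟨fun i => if i = m then Complex.I else 1, fun i => ?_, ?_⟩
  · dsimp only
    split_ifs <;> simp
  · simp only [quarticMonomial]
    split_ifs <;> simp_all [Complex.ext_iff] <;> norm_num

variable [Fintype ι] [DecidableEq ι] [MeasurableSpace (unitaryGroup ι ℂ)]
  (μ : Measure (unitaryGroup ι ℂ)) (e : ι → ℂ)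

noncomputable def fourthMoment (a b c d : ι) : ℂ :=
  ∫ U : unitaryGroup ι ℂ, quarticMonomial ((U : Matrix ι ι ℂ) *ᵥ e) a b c d ∂μ

theorem fourthMoment_comm_left (a b c d : ι) :
    fourthMoment μ e a b c d = fourthMoment μ e b a c d := by
  simp only [fourthMoment, quarticMonomial, mul_comm ((_ *ᵥ e) a) ((_ *ᵥ e) b)]

theorem fourthMoment_comm_right (a b c d : ι) :
    fourthMoment μ e a b c d = fourthMoment μ e a b d c := by
  simp only [fourthMoment, quarticMonomial, mul_right_comm _ (conj ((_ *ᵥ e) c))]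

variable [BorelSpace (unitaryGroup ι ℂ)]

theorem integral_sum_mul_quarticMonomial [IsFiniteMeasure μ] {κ : Type*} (s : Finset κ)
    (w : κ → ℂ) (f g h k : κ → ι) :
    ∫ U : unitaryGroup ι ℂ, ∑ x ∈ s, w x * quarticMonomial ((U : Matrix ι ι ℂ) *ᵥ e)
      (f x) (g x) (h x) (k x) ∂μ = ∑ x ∈ s, w x * fourthMoment μ e (f x) (g x) (h x) (k x) := by
  have hint (a b c d : ι) : Integrable
      (fun U : unitaryGroup ι ℂ => quarticMonomial ((U : Matrix ι ι ℂ) *ᵥ e) a b c d) μ :=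
    Continuous.integrable_of_hasCompactSupport (by unfold quarticMonomial; fun_prop)
      (.of_compactSpace _)
  rw [integral_finsetSum _ fun x _ => (hint _ _ _ _).const_mul _]
  simp only [integral_const_mul, fourthMoment]

theorem sum_sum_fourthMoment [IsProbabilityMeasure μ] (he : star e ⬝ᵥ e = 1) :
    ∑ a, ∑ b, fourthMoment μ e a b a b = 1 := by
  have hnorm (U : unitaryGroup ι ℂ) :
      ∑ p : ι × ι, 1 * quarticMonomial ((U : Matrix ι ι ℂ) *ᵥ e) p.1 p.2 p.1 p.2 = 1 := by
    calc _ = (star ((U : Matrix ι ι ℂ) *ᵥ e) ⬝ᵥ ((U : Matrix ι ι ℂ) *ᵥ e)) ^ 2 := by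
          simp only [one_mul, quarticMonomial, dotProduct, sq, Finset.sum_mul_sum,
            Fintype.sum_prod_type, Pi.star_apply, RCLike.star_def]
          exact Finset.sum_congr rfl fun _ _ => Finset.sum_congr rfl fun _ _ => by ring
      _ = 1 := by rw [star_mulVec_dotProduct_mulVec U.2, he, one_pow]
  have := integral_sum_mul_quarticMonomial μ e univ (fun _ => 1) Prod.fst Prod.snd Prod.fst Prod.snd
  rw [integral_congr_ae (.of_forall hnorm)] at this
  simpa [Fintype.sum_prod_type] using this.symm

variable [μ.IsMulLeftInvariant]

theorem fourthMoment_eq_integral_mulVec_mulVec (V : unitaryGroup ι ℂ) (a b c d : ι) :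
    fourthMoment μ e a b c d = ∫ U : unitaryGroup ι ℂ,
      quarticMonomial ((V : Matrix ι ι ℂ) *ᵥ ((U : Matrix ι ι ℂ) *ᵥ e)) a b c d ∂μ := by
  rw [fourthMoment, ← integral_mul_left_eq_self _ V]
  simp [mulVec_mulVec]

theorem fourthMoment_eq_quarticMonomial_mul {z : ι → ℂ} (hz : ∀ i, star (z i) * z i = 1)
    (a b c d : ι) :
    fourthMoment μ e a b c d = quarticMonomial z a b c d * fourthMoment μ e a b c d := by
  conv_lhs => rw [fourthMoment_eq_integral_mulVec_mulVec μ e ⟨_, diagonal_mem_unitaryGroup hz⟩]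
  have hdiag (ψ : ι → ℂ) : diagonal z *ᵥ ψ = z * ψ := funext (mulVec_diagonal z ψ)
  simp only [hdiag, quarticMonomial_mul, integral_const_mul, fourthMoment]

theorem fourthMoment_eq_zero {a b c d : ι} (hacbd : ¬(a = c ∧ b = d))
    (hadbc : ¬(a = d ∧ b = c)) : fourthMoment μ e a b c d = 0 := by
  obtain ⟨z, hz, hne⟩ := exists_phase_quarticMonomial_ne_one hacbd hadbc
  exact (mul_left_eq_self₀.mp (fourthMoment_eq_quarticMonomial_mul μ e hz a b c d).symm).resolve_left
    hne

theorem fourthMoment_self_eq_of_mulVec_apply [IsFiniteMeasure μ] {V : unitaryGroup ι ℂ} {a b : ι}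
    (hab : a ≠ b) {x y : ℂ} (hV : ∀ v, ((V : Matrix ι ι ℂ) *ᵥ v) a = x * v a + y * v b) :
    fourthMoment μ e a a a a = (conj x * x) ^ 2 * fourthMoment μ e a a a a +
      (conj y * y) ^ 2 * fourthMoment μ e b b b b +
      4 * (conj x * x) * (conj y * y) * fourthMoment μ e a b a b := by
  let idx : Bool → ι := fun t => cond t a b
  let coef : Bool → ℂ := fun t => cond t x y
  have hexpand (ψ : ι → ℂ) : quarticMonomial ((V : Matrix ι ι ℂ) *ᵥ ψ) a a a a =
      ∑ t : Bool × Bool × Bool × Bool, coef t.1 * coef t.2.1 * conj (coef t.2.2.1) *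
        conj (coef t.2.2.2) * quarticMonomial ψ (idx t.1) (idx t.2.1) (idx t.2.2.1) (idx t.2.2.2) := by
    simp only [quarticMonomial, hV, Fintype.sum_prod_type, Fintype.sum_bool, coef, idx, cond_true,
      cond_false, map_add, map_mul]
    ring
  conv_lhs => rw [fourthMoment_eq_integral_mulVec_mulVec μ e V]
  simp_rw [hexpand]
  rw [integral_sum_mul_quarticMonomial]
  simp only [Fintype.sum_prod_type, Fintype.sum_bool, coef, idx, cond_true, cond_false,
    fourthMoment_eq_zero μ e, hab, hab.symm, and_false, false_and, not_false_eq_true, mul_zero,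
    add_zero, zero_add]
  rw [fourthMoment_comm_right μ e a b b a, fourthMoment_comm_left μ e b a a b,
    fourthMoment_comm_left μ e b a b a, fourthMoment_comm_right μ e a b b a]
  ring

theorem fourthMoment_self_eq_and_two_mul_fourthMoment [IsFiniteMeasure μ] {a b : ι}
    (hab : a ≠ b) :
    fourthMoment μ e a a a a = fourthMoment μ e b b b b ∧
      2 * fourthMoment μ e a b a b = fourthMoment μ e a a a a := by
  -- a rational unit vector, so that the Householder reflection has rational entries ±7/25, ±24/25
  let u : ι → ℂ := Pi.single a (3 / 5) + Pi.single b (4 / 5)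
  have hu : star u ⬝ᵥ u = 1 := by
    norm_num [u, dotProduct_add, hab, hab.symm]
  let H : unitaryGroup ι ℂ := ⟨_, one_sub_two_vecMulVec_mem_unitaryGroup hu⟩
  have hH (v : ι → ℂ) (i : ι) : ((H : Matrix ι ι ℂ) *ᵥ v) i = v i - 2 * u i * (star u ⬝ᵥ v) := by
    simp only [H, sub_mulVec, one_mulVec, smul_mulVec, vecMulVec_mulVec, op_smul_eq_smul,
      Pi.sub_apply, Pi.smul_apply, smul_eq_mul]
    ring
  have hrow_a (v : ι → ℂ) : ((H : Matrix ι ι ℂ) *ᵥ v) a = 7 / 25 * v a + -24 / 25 * v b := by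
    simp only [hH, u, Pi.add_apply, Pi.single_eq_same, Pi.single_eq_of_ne hab, add_zero,
      star_add, Pi.star_single, star_div₀, star_ofNat, add_dotProduct, single_dotProduct]
    ring
  have hrow_b (v : ι → ℂ) : ((H : Matrix ι ι ℂ) *ᵥ v) b = -7 / 25 * v b + -24 / 25 * v a := by
    simp only [hH, u, Pi.add_apply, Pi.single_eq_same, Pi.single_eq_of_ne hab.symm, zero_add,
      star_add, Pi.star_single, star_div₀, star_ofNat, add_dotProduct, single_dotProduct]
    ring
  have hA := fourthMoment_self_eq_of_mulVec_apply μ e hab hrow_a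
  have hB := fourthMoment_self_eq_of_mulVec_apply μ e hab.symm hrow_b
  rw [fourthMoment_comm_left μ e b a b a, fourthMoment_comm_right μ e a b b a] at hB
  norm_num [map_ofNat] at hA hB
  have hab_eq : fourthMoment μ e a a a a = fourthMoment μ e b b b b := by
    linear_combination (625 / 1152 : ℂ) * (hA - hB)
  exact ⟨hab_eq, by linear_combination (-390625 / 56448 : ℂ) * hA + (288 / 49 : ℂ) * hab_eq⟩

variable [IsProbabilityMeasure μ]

theorem fourthMoment_pair_eq (he : star e ⬝ᵥ e = 1) (a b : ι) :
    fourthMoment μ e a b a b =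
      (1 + if a = b then 1 else 0) / (Fintype.card ι * (Fintype.card ι + 1)) := by
  set α := fourthMoment μ e a a a a
  have hpair (p q : ι) : fourthMoment μ e p q p q = α / 2 * (1 + if p = q then 1 else 0) := by
    have hp : fourthMoment μ e p p p p = α := by
      by_cases hpa : p = a
      · rw [hpa]
      · exact (fourthMoment_self_eq_and_two_mul_fourthMoment μ e hpa).1
    by_cases hpq : p = q
    · rw [← hpq, hp, if_pos rfl]
      ring
    · rw [if_neg hpq]
      linear_combination ((fourthMoment_self_eq_and_two_mul_fourthMoment μ e hpq).2 + hp) / 2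
  have hsum := sum_sum_fourthMoment μ e he
  simp only [hpair, ← Finset.mul_sum, Finset.sum_add_distrib, Finset.sum_ite_eq, sum_const,
    card_univ, nsmul_eq_mul, mul_one, mem_univ, if_true] at hsum
  have hcard : (Fintype.card ι : ℂ) * (Fintype.card ι + 1) ≠ 0 := by
    have : 0 < Fintype.card ι := Fintype.card_pos_iff.mpr ⟨a⟩
    norm_cast
    positivity
  rw [hpair, eq_div_iff hcard]
  linear_combination (1 + if a = b then (1 : ℂ) else 0) * hsum

theorem fourthMoment_eq (he : star e ⬝ᵥ e = 1) (a b c d : ι) :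
    fourthMoment μ e a b c d =
      ((if a = c then 1 else 0) * (if b = d then 1 else 0) +
        (if a = d then 1 else 0) * (if b = c then 1 else 0)) /
        (Fintype.card ι * (Fintype.card ι + 1)) := by
  by_cases hacbd : a = c ∧ b = d
  · obtain ⟨rfl, rfl⟩ := hacbd
    rw [fourthMoment_pair_eq μ e he]
    split_ifs <;> simp_all
  by_cases hadbc : a = d ∧ b = c
  · obtain ⟨rfl, rfl⟩ := hadbc
    have hab : a ≠ b := fun h => hacbd ⟨h, h.symm⟩
    rw [fourthMoment_comm_right, fourthMoment_pair_eq μ e he]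
    simp [hab, hab.symm]
  rw [fourthMoment_eq_zero μ e hacbd hadbc]
  split_ifs <;> simp_all

theorem integral_norm_sq_star_dotProduct_mulVec (he : star e ⬝ᵥ e = 1) (B : Matrix ι ι ℂ) :
    ∫ U : unitaryGroup ι ℂ,
        ‖star ((U : Matrix ι ι ℂ) *ᵥ e) ⬝ᵥ (B *ᵥ ((U : Matrix ι ι ℂ) *ᵥ e))‖ ^ 2 ∂μ =
      (‖B.trace‖ ^ 2 + ∑ i, ∑ j, ‖B i j‖ ^ 2) / (Fintype.card ι * (Fintype.card ι + 1)) := by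
  have hexpand (ψ : ι → ℂ) : ((‖star ψ ⬝ᵥ (B *ᵥ ψ)‖ ^ 2 : ℝ) : ℂ) =
      ∑ p : (ι × ι) × (ι × ι), B p.1.1 p.1.2 * conj (B p.2.1 p.2.2) *
        quarticMonomial ψ p.1.2 p.2.1 p.1.1 p.2.2 := by
    have hform : star ψ ⬝ᵥ (B *ᵥ ψ) = ∑ p : ι × ι, conj (ψ p.1) * B p.1 p.2 * ψ p.2 := by
      simp only [dotProduct, mulVec, Pi.star_apply, RCLike.star_def, Finset.mul_sum,
        Fintype.sum_prod_type, mul_assoc]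
    rw [Complex.ofReal_pow, ← Complex.mul_conj', hform, map_sum, Finset.sum_mul_sum]
    conv_rhs => rw [Fintype.sum_prod_type]
    refine Finset.sum_congr rfl fun p _ => Finset.sum_congr rfl fun q _ => ?_
    simp only [quarticMonomial, map_mul, Complex.conj_conj]
    ring
  apply Complex.ofReal_injective
  rw [← integral_complex_ofReal (μ := μ)]
  simp_rw [hexpand]
  rw [integral_sum_mul_quarticMonomial]
  simp_rw [fourthMoment_eq μ e he]
  push_cast
  simp only [← Complex.mul_conj']
  simp_rw [← mul_div_assoc, ← Finset.sum_div]
  congr 1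
  simp [Fintype.sum_prod_type, mul_add, Finset.sum_add_distrib, Matrix.trace, Finset.sum_mul_sum]

end HaarRandomState

open HaarRandomState in
theorem stmt_12_general (D : ℕ)
    [MeasurableSpace (Matrix.unitaryGroup (Fin D) ℂ)]
    [BorelSpace (Matrix.unitaryGroup (Fin D) ℂ)]
    (μ : Measure (Matrix.unitaryGroup (Fin D) ℂ))
    [μ.IsHaarMeasure] [IsProbabilityMeasure μ]
    (B : Matrix (Fin D) (Fin D) ℂ) (htr : B.trace = 0)
    (e : Fin D → ℂ) (he : ∑ i, ‖e i‖ ^ 2 = 1) :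
    ∫ U : Matrix.unitaryGroup (Fin D) ℂ,
        ‖star e ⬝ᵥ
          (((U : Matrix (Fin D) (Fin D) ℂ)ᴴ * B *
            (U : Matrix (Fin D) (Fin D) ℂ)) *ᵥ e)‖ ^ 2 ∂μ =
      (∑ i, ∑ j, ‖B i j‖ ^ 2) / (D * (D + 1)) := by
  have he' : star e ⬝ᵥ e = 1 := by
    simp only [dotProduct, Pi.star_apply, RCLike.star_def, Complex.conj_mul']
    exact_mod_cast he
  have hconj (U : Matrix (Fin D) (Fin D) ℂ) :
      star e ⬝ᵥ ((Uᴴ * B * U) *ᵥ e) = star (U *ᵥ e) ⬝ᵥ (B *ᵥ (U *ᵥ e)) := by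
    rw [← mulVec_mulVec, ← mulVec_mulVec, dotProduct_mulVec, ← star_mulVec]
  simp_rw [hconj, integral_norm_sq_star_dotProduct_mulVec μ e he' B, htr, Fintype.card_fin]
  simp

/-- Haar second moment of a traceless Hermitian observable over random pure
states: `∫ |⟨e| U† B U |e⟩|² dμ(U) = tr(B²)/(D(D+1)) = (∑_{ij}|B_{ij}|²)/(D(D+1))`. -/
theorem stmt_12 (D : ℕ) (hD : 1 ≤ D)
    [MeasurableSpace (Matrix.unitaryGroup (Fin D) ℂ)]
    [BorelSpace (Matrix.unitaryGroup (Fin D) ℂ)]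
    (μ : Measure (Matrix.unitaryGroup (Fin D) ℂ))
    [μ.IsHaarMeasure] [IsProbabilityMeasure μ]
    (B : Matrix (Fin D) (Fin D) ℂ) (hB : B.IsHermitian) (htr : B.trace = 0)
    (e : Fin D → ℂ) (he : ∑ i, ‖e i‖ ^ 2 = 1) :
    ∫ U : Matrix.unitaryGroup (Fin D) ℂ,
        ‖star e ⬝ᵥ
          (((U : Matrix (Fin D) (Fin D) ℂ)ᴴ * B *
            (U : Matrix (Fin D) (Fin D) ℂ)) *ᵥ e)‖ ^ 2 ∂μ =
      (∑ i, ∑ j, ‖B i j‖ ^ 2) / (D * (D + 1)) :=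
  stmt_12_general D μ B htr e he
end

section
/- Let n ≥ 1, N = 2n, and let Γ, Γ' : Matrix (Fin N) (Fin N) ℝ be antisymmetric matrices (Γᵀ = −Γ, Γ'ᵀ = −Γ') with Γ * Γᵀ ≤ 1 and Γ' * Γ'ᵀ ≤ 1 in the Loewner order. Let A ⊆ Fin N with |A| = 2m, and suppose Γ'_{ab} = Γ_{ab} whenever a ∉ A and b ∉ A. Then | (n − ½‖Γ‖_F²) − (n − ½‖Γ'‖_F²) | ≤ 4m, where ‖Γ‖_F² = ∑_{a,b} Γ_{ab}². (Consequently a unitary gate supported on m fermionic modes changes FAF₁(ρ) = n − ½‖Γ_ρ‖_F² by at most 4m, so preparing a state with FAF₁ ≥ c·n from a Gaussian state using Gaussian unitaries interleaved with t non-Gaussian gates on at most m modes requires t ≥ (c/4)·(n/m).) -/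
/-!
Split the Frobenius sum `∑ a, ∑ b, Γ a b ^ 2` into the block `Aᶜ × Aᶜ`, where `Γ` and `Γ'` agree,
and the pairs meeting `A`. The diagonal of `1 - Γ Γᵀ` is nonnegative, so every row of `Γ` has
squared norm at most `1`, and by antisymmetry so does every column. Hence the pairs meeting `A`
contribute at most `2 #A = 4m` for either matrix, and the two antiflatnesses differ by at most
`½ · 4m`.
-/

open Finset Matrix

variable {ι : Type*} [Fintype ι]

lemma Matrix.PosSemidef.sum_sq_row_le_one [DecidableEq ι] {M : Matrix ι ι ℝ}
    (h : (1 - M * Mᵀ).PosSemidef) (a : ι) : ∑ b, M a b ^ 2 ≤ 1 := by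
  have := h.diag_nonneg (i := a)
  simpa [sub_apply, mul_apply, sq] using this

lemma Matrix.sum_sq_col_eq_sum_sq_row_of_transpose_eq_neg {M : Matrix ι ι ℝ} (hM : Mᵀ = -M)
    (b : ι) : ∑ a, M a b ^ 2 = ∑ a, M b a ^ 2 :=
  sum_congr rfl fun a _ => by rw [← transpose_apply M b a, hM, neg_apply, neg_sq]

lemma Finset.compl_product_compl [DecidableEq ι] (A : Finset ι) :
    (Aᶜ ×ˢ Aᶜ)ᶜ = A ×ˢ univ ∪ univ ×ˢ A := by
  ext p
  simp only [mem_compl, mem_product, mem_union, mem_univ, and_true, true_and]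
  tauto

lemma Matrix.sum_sq_off_compl_block_le [DecidableEq ι] {M : Matrix ι ι ℝ}
    (hrow : ∀ a, ∑ b, M a b ^ 2 ≤ 1) (hcol : ∀ b, ∑ a, M a b ^ 2 ≤ 1) (A : Finset ι) :
    ∑ p ∈ (Aᶜ ×ˢ Aᶜ)ᶜ, M p.1 p.2 ^ 2 ≤ 2 * #A := by
  have hinter : 0 ≤ ∑ p ∈ A ×ˢ univ ∩ univ ×ˢ A, M p.1 p.2 ^ 2 :=
    sum_nonneg fun _ _ => sq_nonneg _
  have hrows : ∑ p ∈ A ×ˢ univ, M p.1 p.2 ^ 2 ≤ #A := by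
    rw [sum_product]
    simpa using sum_le_sum fun a (_ : a ∈ A) => hrow a
  have hcols : ∑ p ∈ univ ×ˢ A, M p.1 p.2 ^ 2 ≤ #A := by
    rw [sum_product_right]
    simpa using sum_le_sum fun b (_ : b ∈ A) => hcol b
  rw [compl_product_compl]
  linarith [sum_union_inter (s₁ := A ×ˢ univ) (s₂ := univ ×ˢ A) (f := fun p => M p.1 p.2 ^ 2)]

theorem stmt_16_general (n m : ℕ)
    (Γ Γ' : Matrix (Fin (2 * n)) (Fin (2 * n)) ℝ)
    (hΓanti : Γᵀ = -Γ) (hΓ'anti : Γ'ᵀ = -Γ')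
    (hΓ : ((1 : Matrix (Fin (2 * n)) (Fin (2 * n)) ℝ) - Γ * Γᵀ).PosSemidef)
    (hΓ' : ((1 : Matrix (Fin (2 * n)) (Fin (2 * n)) ℝ) - Γ' * Γ'ᵀ).PosSemidef)
    (A : Finset (Fin (2 * n))) (hA : A.card = 2 * m)
    (heq : ∀ a b, a ∉ A → b ∉ A → Γ' a b = Γ a b) :
    |((n : ℝ) - (1 / 2) * ∑ a, ∑ b, (Γ a b) ^ 2) -
        ((n : ℝ) - (1 / 2) * ∑ a, ∑ b, (Γ' a b) ^ 2)| ≤ 4 * m := by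
  set S := Aᶜ ×ˢ Aᶜ
  have hsplit (M : Matrix (Fin (2 * n)) (Fin (2 * n)) ℝ) :
      ∑ a, ∑ b, M a b ^ 2 = ∑ p ∈ S, M p.1 p.2 ^ 2 + ∑ p ∈ Sᶜ, M p.1 p.2 ^ 2 := by
    rw [← Fintype.sum_prod_type' fun a b => M a b ^ 2, sum_add_sum_compl]
  have hS : ∑ p ∈ S, Γ' p.1 p.2 ^ 2 = ∑ p ∈ S, Γ p.1 p.2 ^ 2 :=
    sum_congr rfl fun p hp => by
      simp only [S, mem_product, mem_compl] at hp
      rw [heq _ _ hp.1 hp.2]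
  have hbound {M : Matrix (Fin (2 * n)) (Fin (2 * n)) ℝ} (hanti : Mᵀ = -M)
      (hM : (1 - M * Mᵀ).PosSemidef) : ∑ p ∈ Sᶜ, M p.1 p.2 ^ 2 ≤ 4 * m := by
    have := sum_sq_off_compl_block_le hM.sum_sq_row_le_one
      (fun b => (sum_sq_col_eq_sum_sq_row_of_transpose_eq_neg hanti b).trans_le
        (hM.sum_sq_row_le_one b)) A
    rw [hA] at this
    push_cast at this
    linarith
  have hdiff := abs_sub_le_of_nonneg_of_le (sum_nonneg fun p _ => sq_nonneg (Γ' p.1 p.2))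
    (hbound hΓ'anti hΓ') (sum_nonneg fun p _ => sq_nonneg (Γ p.1 p.2)) (hbound hΓanti hΓ)
  rw [hsplit Γ, hsplit Γ', hS]
  calc _ = |(∑ p ∈ Sᶜ, Γ' p.1 p.2 ^ 2 - ∑ p ∈ Sᶜ, Γ p.1 p.2 ^ 2) / 2| := by ring_nf
    _ ≤ 4 * m := by
      rw [abs_div, abs_two]
      linarith [(Nat.cast_nonneg m : (0 : ℝ) ≤ m)]

/-- Local change bound for the antiflatness: if two antisymmetric covariance
matrices with singular values at most one agree on all entries with both
indices outside a set `A` of `2m` Majorana indices, then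
`|FAF₁(Γ) − FAF₁(Γ')| ≤ 4m`, where `FAF₁(Γ) = n − ½‖Γ‖_F²`. -/
theorem stmt_16 (n m : ℕ) (hn : 1 ≤ n)
    (Γ Γ' : Matrix (Fin (2 * n)) (Fin (2 * n)) ℝ)
    (hΓanti : Γᵀ = -Γ) (hΓ'anti : Γ'ᵀ = -Γ')
    (hΓ : ((1 : Matrix (Fin (2 * n)) (Fin (2 * n)) ℝ) - Γ * Γᵀ).PosSemidef)
    (hΓ' : ((1 : Matrix (Fin (2 * n)) (Fin (2 * n)) ℝ) - Γ' * Γ'ᵀ).PosSemidef)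
    (A : Finset (Fin (2 * n))) (hA : A.card = 2 * m)
    (heq : ∀ a b, a ∉ A → b ∉ A → Γ' a b = Γ a b) :
    |((n : ℝ) - (1 / 2) * ∑ a, ∑ b, (Γ a b) ^ 2) -
        ((n : ℝ) - (1 / 2) * ∑ a, ∑ b, (Γ' a b) ^ 2)| ≤ 4 * m :=
  stmt_16_general n m Γ Γ' hΓanti hΓ'anti hΓ hΓ' A hA heq
end
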